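/- Let ψ(p) = ξ_A·log₂(1 + p·h_A) + ξ_B·log₂(1 + p·h_B) − α·p with ξ_A, ξ_B ≥ 0 (not both zero), h_A, h_B > 0, α > 0, and σ = ln 2. If α ≥ (ξ_A·h_A + ξ_B·h_B)/σ then ψ is maximized over p ≥ 0 at p* = 0; otherwise the maximizer p* > 0 is the unique positive root of the quadratic φ₁p² + φ₂p + φ₃ = 0, where φ₁ = α·h_A·h_B, φ₂ = α·(h_A + h_B) − (ξ_A + ξ_B)·h_A·h_B/σ, φ₃ = α − (ξ_A·h_A + ξ_B·h_B)/σ, namely p* = (−φ₂ + √(φ₂² − 4φ₁φ₃))/(2φ₁). -/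

import Mathlib

set_option maxHeartbeats 1000000 in
/-- Broadcast-phase power allocation for two-way relaying: with
`ψ(p) = ξA·log₂(1+p·hA) + ξB·log₂(1+p·hB) − α·p`, if
`α ≥ (ξA·hA + ξB·hB)/ln 2` then `p = 0` maximizes `ψ` over `p ≥ 0`; otherwise
the maximizer is the unique positive root
`p* = (−φ₂ + √(φ₂² − 4φ₁φ₃))/(2φ₁)` of `φ₁p² + φ₂p + φ₃ = 0`. -/
theorem bc_phase_power (ξA ξB hA hB α : ℝ) (hξA : 0 ≤ ξA) (hξB : 0 ≤ ξB)
    (hξ : ¬(ξA = 0 ∧ ξB = 0)) (hhA : 0 < hA) (hhB : 0 < hB) (hα : 0 < α) :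
    (α ≥ (ξA * hA + ξB * hB) / Real.log 2 →
      ∀ p : ℝ, 0 ≤ p →
        ξA * Real.logb 2 (1 + p * hA) + ξB * Real.logb 2 (1 + p * hB) - α * p ≤
          ξA * Real.logb 2 (1 + 0 * hA) + ξB * Real.logb 2 (1 + 0 * hB) - α * 0) ∧
    (α < (ξA * hA + ξB * hB) / Real.log 2 →
      let φ₁ := α * hA * hB
      let φ₂ := α * (hA + hB) - (ξA + ξB) * hA * hB / Real.log 2
      let φ₃ := α - (ξA * hA + ξB * hB) / Real.log 2
      let pstar := (-φ₂ + Real.sqrt (φ₂ ^ 2 - 4 * φ₁ * φ₃)) / (2 * φ₁)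
      0 < pstar ∧
      φ₁ * pstar ^ 2 + φ₂ * pstar + φ₃ = 0 ∧
      (∀ q : ℝ, 0 < q → φ₁ * q ^ 2 + φ₂ * q + φ₃ = 0 → q = pstar) ∧
      (∀ p : ℝ, 0 ≤ p →
        ξA * Real.logb 2 (1 + p * hA) + ξB * Real.logb 2 (1 + p * hB) - α * p ≤
          ξA * Real.logb 2 (1 + pstar * hA) + ξB * Real.logb 2 (1 + pstar * hB) -
            α * pstar)) := by
  have hσ : (0:ℝ) < Real.log 2 := Real.log_pos (by norm_num)
  set σ := Real.log 2 with hσdef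
  have hσ' : σ ≠ 0 := ne_of_gt hσ
  constructor
  · -- part 1
    intro h p hp
    have haA : (0:ℝ) < 1 + p * hA := by positivity
    have haB : (0:ℝ) < 1 + p * hB := by positivity
    have lA : Real.log (1 + p * hA) ≤ p * hA := by
      have := Real.log_le_sub_one_of_pos haA; linarith
    have lB : Real.log (1 + p * hB) ≤ p * hB := by
      have := Real.log_le_sub_one_of_pos haB; linarith
    simp only [zero_mul, add_zero, Real.logb_one, mul_zero, sub_zero, Real.logb,
      Real.log_one, zero_div, ← hσdef]
    have hα' : (ξA * hA + ξB * hB) ≤ α * σ := by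
      rw [ge_iff_le, div_le_iff₀ hσ] at h; linarith
    have key : ξA * Real.log (1 + p * hA) + ξB * Real.log (1 + p * hB) ≤ σ * α * p := by
      nlinarith [mul_le_mul_of_nonneg_left lA hξA, mul_le_mul_of_nonneg_left lB hξB,
        mul_nonneg hp (sub_nonneg.mpr hα')]
    calc ξA * (Real.log (1 + p * hA) / σ) + ξB * (Real.log (1 + p * hB) / σ) - α * p
        = (ξA * Real.log (1 + p * hA) + ξB * Real.log (1 + p * hB) - σ * α * p) / σ := by
          field_simp
      _ ≤ 0 := div_nonpos_iff.mpr (Or.inr ⟨by linarith, hσ.le⟩)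
  · -- part 2
    intro h
    intro φ₁ φ₂ φ₃ pstar
    have hφ₁ : 0 < φ₁ := by positivity
    have hφ₃ : φ₃ < 0 := by simp only [φ₃]; linarith
    have hDgt : φ₂ ^ 2 < φ₂ ^ 2 - 4 * φ₁ * φ₃ := by nlinarith
    have hD : (0:ℝ) ≤ φ₂ ^ 2 - 4 * φ₁ * φ₃ := by nlinarith [sq_nonneg φ₂]
    set s := Real.sqrt (φ₂ ^ 2 - 4 * φ₁ * φ₃) with hs
    have hs2 : s ^ 2 = φ₂ ^ 2 - 4 * φ₁ * φ₃ := Real.sq_sqrt hD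
    have habs : |φ₂| < s := by
      have := Real.sqrt_lt_sqrt (sq_nonneg φ₂) hDgt
      rwa [Real.sqrt_sq_eq_abs] at this
    have hsφ₂ : -φ₂ < s := by have := neg_abs_le φ₂; linarith
    have hppos : 0 < pstar := by
      apply div_pos ?_ (by positivity)
      rw [← hs]; have := le_abs_self φ₂; linarith
    have hhalf : φ₁ * pstar + φ₂ = (φ₂ + s)/2 := by
      simp only [pstar, ← hs]; field_simp; ring
    have hroot : φ₁ * pstar ^ 2 + φ₂ * pstar + φ₃ = 0 := by
      have h2φ₁ : (2*φ₁) ≠ 0 := by positivity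
      simp only [pstar, ← hs]
      field_simp
      nlinarith [hs2]
    have hFOC : ξA * hA * (1 + pstar * hB) + ξB * hB * (1 + pstar * hA)
        = α * σ * ((1 + pstar * hA) * (1 + pstar * hB)) := by
      have h0 : σ * (φ₁ * pstar ^ 2 + φ₂ * pstar + φ₃) = 0 := by rw [hroot]; ring
      simp only [φ₁, φ₂, φ₃] at h0
      field_simp at h0
      linarith [h0]
    clear_value pstar s φ₁ φ₂ φ₃ σ
    refine ⟨hppos, hroot, ?_, ?_⟩
    · intro q hq hqr
      have key : (q - pstar) * (φ₁ * (q + pstar) + φ₂) = 0 := by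
        linear_combination hqr - hroot
      have hpos : 0 < φ₁ * (q + pstar) + φ₂ := by
        nlinarith [mul_pos hφ₁ hq, hhalf]
      have := mul_eq_zero.mp key
      rcases this with h1 | h2
      · linarith [sub_eq_zero.mp h1]
      · linarith
    · intro p hp
      have ha : (0:ℝ) < 1 + pstar * hA := by positivity
      have hb : (0:ℝ) < 1 + pstar * hB := by positivity
      have hpa : (0:ℝ) < 1 + p * hA := by positivity
      have hpb : (0:ℝ) < 1 + p * hB := by positivity
      -- FOC
      have lA : Real.log (1 + p * hA) - Real.log (1 + pstar * hA)
          ≤ hA * (p - pstar) / (1 + pstar * hA) := by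
        rw [← Real.log_div (ne_of_gt hpa) (ne_of_gt ha)]
        have := Real.log_le_sub_one_of_pos (div_pos hpa ha)
        have e : (1 + p * hA) / (1 + pstar * hA) - 1 = hA * (p - pstar) / (1 + pstar * hA) := by
          field_simp; ring
        linarith [e ▸ this]
      have lB : Real.log (1 + p * hB) - Real.log (1 + pstar * hB)
          ≤ hB * (p - pstar) / (1 + pstar * hB) := by
        rw [← Real.log_div (ne_of_gt hpb) (ne_of_gt hb)]
        have := Real.log_le_sub_one_of_pos (div_pos hpb hb)
        have e : (1 + p * hB) / (1 + pstar * hB) - 1 = hB * (p - pstar) / (1 + pstar * hB) := by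
          field_simp; ring
        linarith [e ▸ this]
      have hsum : ξA * (hA * (p - pstar) / (1 + pstar * hA))
          + ξB * (hB * (p - pstar) / (1 + pstar * hB)) = σ * α * (p - pstar) := by
        field_simp
        linear_combination (p - pstar) * hFOC
      have hfin : ξA * Real.log (1 + p * hA) + ξB * Real.log (1 + p * hB) - σ * α * p
          ≤ ξA * Real.log (1 + pstar * hA) + ξB * Real.log (1 + pstar * hB) - σ * α * pstar := by
        have mA := mul_le_mul_of_nonneg_left lA hξA
        have mB := mul_le_mul_of_nonneg_left lB hξB
        nlinarith [mA, mB, hsum]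
      simp only [Real.logb, ← hσdef]
      calc ξA * (Real.log (1 + p * hA) / σ) + ξB * (Real.log (1 + p * hB) / σ) - α * p
          = (ξA * Real.log (1 + p * hA) + ξB * Real.log (1 + p * hB) - σ * α * p) / σ := by
            field_simp
        _ ≤ (ξA * Real.log (1 + pstar * hA) + ξB * Real.log (1 + pstar * hB) - σ * α * pstar) / σ := by
            gcongr
        _ = ξA * (Real.log (1 + pstar * hA) / σ) + ξB * (Real.log (1 + pstar * hB) / σ) - α * pstar := by
            field_simp
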